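/- arXiv:2304.03490 — 3 statements merged into one kernel-verified Lean document; each statement's English description precedes it below -/
import Mathlib

section
/- Let A, B be positive semidefinite symmetric n×n real matrices. Then A·(I + BA)⁻¹ = √A·(I + √A·B·√A)⁻¹·√A. -/
section OldSqrt

open scoped ComplexOrder

/-- The positive semidefinite square root of a positive semidefinite matrix (the definition
of `Matrix.PosSemidef.sqrt` from the older Mathlib, which has since been removed). -/
noncomputable def Matrix.PosSemidef.sqrt {n : Type*} [Fintype n] [DecidableEq n] {𝕜 : Type*}
    [RCLike 𝕜] {A : Matrix n n 𝕜} (hA : A.PosSemidef) : Matrix n n 𝕜 :=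
  hA.1.eigenvectorUnitary.1 * Matrix.diagonal ((↑) ∘ Real.sqrt ∘ hA.1.eigenvalues) *
    (star hA.1.eigenvectorUnitary : Matrix n n 𝕜)

end OldSqrt

lemma stmt1_sqrt_conjTranspose {n : ℕ} {A : Matrix (Fin n) (Fin n) ℝ} (hA : A.PosSemidef) :
    hA.sqrt.conjTranspose = hA.sqrt := by
  unfold Matrix.PosSemidef.sqrt
  simp only [Matrix.conjTranspose_mul, Matrix.diagonal_conjTranspose, Matrix.star_eq_conjTranspose,
    Matrix.conjTranspose_conjTranspose, Matrix.mul_assoc, star_trivial]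

lemma stmt1_sqrt_mul_self {n : ℕ} {A : Matrix (Fin n) (Fin n) ℝ} (hA : A.PosSemidef) :
    hA.sqrt * hA.sqrt = A := by
  unfold Matrix.PosSemidef.sqrt
  have hU : (star hA.1.eigenvectorUnitary : Matrix (Fin n) (Fin n) ℝ) *
      hA.1.eigenvectorUnitary.1 = 1 := Unitary.coe_star_mul_self _
  conv_rhs => rw [hA.1.spectral_theorem, Unitary.conjStarAlgAut_apply]
  calc _ = hA.1.eigenvectorUnitary.1 *
        (Matrix.diagonal ((RCLike.ofReal : ℝ → ℝ) ∘ Real.sqrt ∘ hA.1.eigenvalues) *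
          ((star hA.1.eigenvectorUnitary : Matrix (Fin n) (Fin n) ℝ) *
            hA.1.eigenvectorUnitary.1) *
          Matrix.diagonal ((RCLike.ofReal : ℝ → ℝ) ∘ Real.sqrt ∘ hA.1.eigenvalues)) *
        (star hA.1.eigenvectorUnitary : Matrix (Fin n) (Fin n) ℝ) := by
        simp only [Matrix.mul_assoc]
    _ = _ := by
        rw [hU, Matrix.mul_one, Matrix.diagonal_mul_diagonal]
        congr 3
        ext i
        simp [Real.mul_self_sqrt (hA.eigenvalues_nonneg i)]

/-- Let `A, B` be positive semidefinite symmetric `n × n` real matrices.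
Then `A * (I + B * A)⁻¹ = √A * (I + √A * B * √A)⁻¹ * √A`, where `√A = hA.sqrt` is the
positive semidefinite square root of `A` and `⁻¹` is the matrix inverse. -/
theorem stmt1 {n : ℕ} (A B : Matrix (Fin n) (Fin n) ℝ)
    (hA : A.PosSemidef) (hB : B.PosSemidef) :
    A * (1 + B * A)⁻¹ = hA.sqrt * (1 + hA.sqrt * B * hA.sqrt)⁻¹ * hA.sqrt := by
  set S := hA.sqrt with hS
  have hSH : S.conjTranspose = S := stmt1_sqrt_conjTranspose hA
  have hSS : S * S = A := stmt1_sqrt_mul_self hA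
  have hSBS : (S * B * S).PosSemidef := by
    have := hB.mul_mul_conjTranspose_same S
    rwa [hSH] at this
  have hM : (1 + S * B * S).PosDef := Matrix.PosDef.add_posSemidef Matrix.PosDef.one hSBS
  have hMunit : IsUnit (1 + S * B * S) := hM.isUnit
  have hNunit : IsUnit (1 + B * A) := by
    rw [Matrix.isUnit_iff_isUnit_det]
    have hdet : (1 + B * A).det = (1 + S * B * S).det := by
      rw [← hSS, ← Matrix.mul_assoc, Matrix.det_one_add_mul_comm, ← Matrix.mul_assoc]
    rw [hdet]
    exact (Matrix.isUnit_iff_isUnit_det _).mp hMunit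
  have key : (1 + S * B * S) * S = S * (1 + B * A) := by
    rw [← hSS]
    noncomm_ring
  have hMinv := Matrix.nonsing_inv_mul _ ((Matrix.isUnit_iff_isUnit_det _).mp hMunit)
  have hNinv := Matrix.mul_nonsing_inv _ ((Matrix.isUnit_iff_isUnit_det _).mp hNunit)
  have hswap : S * (1 + B * A)⁻¹ = (1 + S * B * S)⁻¹ * S := by
    calc S * (1 + B * A)⁻¹
        = ((1 + S * B * S)⁻¹ * (1 + S * B * S)) * (S * (1 + B * A)⁻¹) := by
          rw [hMinv, Matrix.one_mul]
      _ = (1 + S * B * S)⁻¹ * (((1 + S * B * S) * S) * (1 + B * A)⁻¹) := by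
          simp only [Matrix.mul_assoc]
      _ = (1 + S * B * S)⁻¹ * ((S * (1 + B * A)) * (1 + B * A)⁻¹) := by rw [key]
      _ = (1 + S * B * S)⁻¹ * S := by simp only [Matrix.mul_assoc, hNinv, Matrix.mul_one]
  calc A * (1 + B * A)⁻¹ = S * (S * (1 + B * A)⁻¹) := by rw [← Matrix.mul_assoc, hSS]
    _ = S * ((1 + S * B * S)⁻¹ * S) := by rw [hswap]
    _ = S * (1 + S * B * S)⁻¹ * S := (Matrix.mul_assoc _ _ _).symm
end

section
/- For every n ∈ ℕ there exist Borel measurable functions λ₁,…,λ_n : S(ℝⁿ) → ℝ and h₁,…,h_n : S(ℝⁿ) → ℝⁿ such that for every symmetric matrix A, the vectors (h_k(A))_{k=1}^n form an orthonormal basis of ℝⁿ, |λ₁(A)| ≥ … ≥ |λ_n(A)|, and A = Σ_k λ_k(A) · h_k(A) ⊗ h_k(A). -/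
open Set

variable {n : ℕ}

abbrev Mat (n : ℕ) := Fin n → Fin n → ℝ

/-- symmetrization -/
noncomputable def symz (A : Mat n) : Mat n := fun i j => (A i j + A j i) / 2

noncomputable def lamOf (A x : Mat n) (k : Fin n) : ℝ := ∑ i, ∑ j, x k i * symz A i j * x k j

def Fset (A : Mat n) : Set (Mat n) :=
  {x | (∀ k l, (∑ i, x k i * x l i) = if k = l then 1 else 0) ∧
       (∀ k l, k ≤ l → |lamOf A x l| ≤ |lamOf A x k|) ∧
       (∀ i j, symz A i j = ∑ k, lamOf A x k * x k i * x k j)}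

def Kset (n : ℕ) : Set (Mat n) := {x | ∀ k i, x k i ∈ Icc (-1 : ℝ) 1}

lemma isCompact_Kset : IsCompact (Kset n) := by
  have : Kset n = Set.univ.pi (fun _ : Fin n => Set.univ.pi fun _ : Fin n => Icc (-1:ℝ) 1) := by
    ext x; simp [Kset, Set.mem_univ_pi, Pi.le_def, forall_and]
  rw [this]
  exact isCompact_univ_pi fun _ => isCompact_univ_pi fun _ => isCompact_Icc

lemma Fset_subset_Kset (A : Mat n) : Fset A ⊆ Kset n := by
  intro x hx k i
  have h1 : x k i * x k i ≤ 1 := by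
    have h := hx.1 k k
    simp only [if_pos rfl] at h
    calc x k i * x k i ≤ ∑ j, x k j * x k j :=
          Finset.single_le_sum (fun j _ => mul_self_nonneg (x k j)) (Finset.mem_univ i)
      _ = 1 := h
  have := abs_le_one_iff_mul_self_le_one.2 h1
  exact abs_le.1 this

lemma continuous_lamOf (k : Fin n) : Continuous fun p : Mat n × Mat n => lamOf p.1 p.2 k := by
  unfold lamOf symz
  fun_prop

lemma isClosed_graphF : IsClosed {p : Mat n × Mat n | p.2 ∈ Fset p.1} := by
  have hx : ∀ (k : Fin n) (i : Fin n), Continuous fun p : Mat n × Mat n => p.2 k i := by fun_prop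
  have hA : ∀ (i j : Fin n), Continuous fun p : Mat n × Mat n => symz p.1 i j := by
    unfold symz; fun_prop
  have h1 : IsClosed {p : Mat n × Mat n |
      ∀ k l, (∑ i, p.2 k i * p.2 l i) = if k = l then 1 else 0} := by
    simp only [setOf_forall]
    exact isClosed_iInter fun k => isClosed_iInter fun l =>
      isClosed_eq (by fun_prop) continuous_const
  have h2 : IsClosed {p : Mat n × Mat n |
      ∀ k l, k ≤ l → |lamOf p.1 p.2 l| ≤ |lamOf p.1 p.2 k|} := by
    simp only [setOf_forall]
    refine isClosed_iInter fun k => isClosed_iInter fun l => ?_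
    exact isClosed_iInter fun _ =>
      isClosed_le ((continuous_lamOf l).abs) ((continuous_lamOf k).abs)
  have h3 : IsClosed {p : Mat n × Mat n |
      ∀ i j, symz p.1 i j = ∑ k, lamOf p.1 p.2 k * p.2 k i * p.2 k j} := by
    simp only [setOf_forall]
    refine isClosed_iInter fun i => isClosed_iInter fun j => isClosed_eq (hA i j) ?_
    exact continuous_finset_sum _ fun k _ =>
      (((continuous_lamOf k).mul (hx k i)).mul (hx k j))
  have : {p : Mat n × Mat n | p.2 ∈ Fset p.1}
      = _ ∩ (_ ∩ _) := rfl
  exact h1.inter (h2.inter h3)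

lemma lamOf_eq {A x : Mat n} {c : Fin n → ℝ}
    (horth : ∀ k l, (∑ i, x k i * x l i) = if k = l then 1 else 0)
    (hdec : ∀ i j, symz A i j = ∑ m, c m * x m i * x m j) (k : Fin n) :
    lamOf A x k = c k := by
  unfold lamOf
  have : ∀ i : Fin n, ∑ j, x k i * symz A i j * x k j
      = ∑ m, (c m * (x k i * x m i)) * ∑ j, x m j * x k j := by
    intro i
    calc ∑ j, x k i * symz A i j * x k j
        = ∑ j, ∑ m, (c m * (x k i * x m i)) * (x m j * x k j) := by
          refine Finset.sum_congr rfl fun j _ => ?_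
          rw [hdec i j, Finset.mul_sum, Finset.sum_mul]
          exact Finset.sum_congr rfl fun m _ => by ring
      _ = ∑ m, ∑ j, (c m * (x k i * x m i)) * (x m j * x k j) := Finset.sum_comm
      _ = ∑ m, (c m * (x k i * x m i)) * ∑ j, x m j * x k j := by
          exact Finset.sum_congr rfl fun m _ => (Finset.mul_sum _ _ _).symm
  calc ∑ i, ∑ j, x k i * symz A i j * x k j
      = ∑ i, ∑ m, (c m * (x k i * x m i)) * ∑ j, x m j * x k j := by
        exact Finset.sum_congr rfl fun i _ => this i
    _ = ∑ m, c m * ((∑ i, x k i * x m i) * ∑ j, x m j * x k j) := by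
        rw [Finset.sum_comm]
        refine Finset.sum_congr rfl fun m _ => ?_
        conv_rhs => rw [Finset.sum_mul]
        rw [Finset.mul_sum]
        exact Finset.sum_congr rfl fun i _ => by ring
    _ = c k := by
        have h1 : ∀ m, (∑ i, x k i * x m i) = if k = m then 1 else 0 := fun m => horth k m
        have h2 : ∀ m, (∑ j, x m j * x k j) = if m = k then 1 else 0 := fun m => horth m k
        rw [Finset.sum_eq_single k]
        · rw [h1 k]; norm_num
        · intro m _ hm
          rw [h2 m, if_neg hm]; ring
        · intro h; exact absurd (Finset.mem_univ k) h

lemma Fset_nonempty (A : Mat n) : (Fset A).Nonempty := by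
  classical
  set S : Matrix (Fin n) (Fin n) ℝ := Matrix.of (symz A) with hSdef
  have hS : S.IsHermitian := by
    rw [Matrix.IsHermitian]
    ext i j
    simp only [Matrix.conjTranspose_apply, Matrix.of_apply, hSdef, star_trivial, symz]
    ring
  set μ : Fin n → ℝ := hS.eigenvalues with hμ
  set v : Fin n → (Fin n → ℝ) := fun k => ⇑(hS.eigenvectorBasis k) with hv
  have horth : ∀ k l, (∑ i, v k i * v l i) = if k = l then 1 else 0 := by
    intro k l
    have := (orthonormal_iff_ite.1 hS.eigenvectorBasis.orthonormal) k l
    rw [PiLp.inner_apply] at this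
    simp at this
    rw [← this]
    exact Finset.sum_congr rfl fun i _ => mul_comm _ _
  have hdec : ∀ i j, symz A i j = ∑ m, μ m * v m i * v m j := by
    intro i j
    have hst := hS.spectral_theorem
    rw [Unitary.conjStarAlgAut_apply] at hst
    have := congrFun (congrFun hst i) j
    rw [Matrix.mul_apply] at this
    calc symz A i j = S i j := rfl
      _ = ∑ m, μ m * v m i * v m j := by
        rw [this]
        refine Finset.sum_congr rfl fun m _ => ?_
        rw [Matrix.mul_diagonal, Matrix.star_apply]
        simp only [Function.comp_apply, Matrix.IsHermitian.eigenvectorUnitary_apply,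
          star_trivial, RCLike.ofReal_real_eq_id, id_eq]
        show _ = μ m * v m i * v m j
        rw [hv, hμ]
        ring
  set σ : Equiv.Perm (Fin n) := Tuple.sort (fun k => -|μ k|) with hσ
  have hmono := Tuple.monotone_sort (fun k => -|μ k|)
  refine ⟨fun k => v (σ k), ?_, ?_, ?_⟩
  · intro k l
    rw [horth (σ k) (σ l)]
    simp [Equiv.apply_eq_iff_eq]
  · intro k l hkl
    have h1 : ∀ m, lamOf A (fun k => v (σ k)) m = μ (σ m) := by
      refine lamOf_eq (fun k l => ?_) (fun i j => ?_)
      · rw [horth (σ k) (σ l)]; simp [Equiv.apply_eq_iff_eq]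
      · rw [hdec i j, ← Equiv.sum_comp σ (fun m => μ m * v m i * v m j)]
    rw [h1 k, h1 l]
    have := hmono hkl
    simpa using neg_le_neg_iff.1 this
  · intro i j
    have h1 : ∀ m, lamOf A (fun k => v (σ k)) m = μ (σ m) := by
      refine lamOf_eq (fun k l => ?_) (fun i j => ?_)
      · rw [horth (σ k) (σ l)]; simp [Equiv.apply_eq_iff_eq]
      · rw [hdec i j, ← Equiv.sum_comp σ (fun m => μ m * v m i * v m j)]
    rw [hdec i j, ← Equiv.sum_comp σ (fun m => μ m * v m i * v m j)]
    exact Finset.sum_congr rfl fun m _ => by rw [h1 m]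

lemma continuous_coord (c : Fin n × Fin n) : Continuous fun x : Mat n => x c.1 c.2 :=
  (continuous_apply c.2).comp (continuous_apply c.1)

lemma isClosed_Fset (A : Mat n) : IsClosed (Fset A) := by
  have : Fset A = (fun x : Mat n => ((A, x) : Mat n × Mat n)) ⁻¹' {p | p.2 ∈ Fset p.1} := by
    ext x; simp
  rw [this]
  exact isClosed_graphF.preimage (Continuous.prodMk_right A)

lemma isCompact_Fset (A : Mat n) : IsCompact (Fset A) :=
  isCompact_Kset.of_isClosed_subset (isClosed_Fset A) (Fset_subset_Kset A)

noncomputable def coordMin (c : Fin n × Fin n) (s : Set (Mat n)) : ℝ :=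
  sInf ((fun x => x c.1 c.2) '' s)

lemma coordMin_mem {s : Set (Mat n)} (hs : IsCompact s) (hne : s.Nonempty) (c : Fin n × Fin n) :
    ∃ x ∈ s, x c.1 c.2 = coordMin c s := by
  have h := (hs.image (continuous_coord c)).sInf_mem (hne.image _)
  obtain ⟨x, hx, hx2⟩ := h
  exact ⟨x, hx, hx2⟩

lemma coordMin_le {s : Set (Mat n)} (hs : IsCompact s) {x : Mat n} (hx : x ∈ s)
    (c : Fin n × Fin n) : coordMin c s ≤ x c.1 c.2 :=
  csInf_le (hs.image (continuous_coord c)).bddBelow ⟨x, hx, rfl⟩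

noncomputable def gsets (A : Mat n) : List (Fin n × Fin n) → Set (Mat n)
  | [] => Fset A
  | c :: cs => {x ∈ gsets A cs | x c.1 c.2 = coordMin c (gsets A cs)}

lemma gsets_subset_Fset (A : Mat n) (cs : List (Fin n × Fin n)) : gsets A cs ⊆ Fset A := by
  induction cs with
  | nil => exact fun x hx => hx
  | cons c cs ih => exact fun x hx => ih hx.1

lemma isCompact_gsets (A : Mat n) (cs : List (Fin n × Fin n)) : IsCompact (gsets A cs) := by
  induction cs with
  | nil => exact isCompact_Fset A
  | cons c cs ih =>
      have : gsets A (c :: cs) = gsets A cs ∩ {x | x c.1 c.2 = coordMin c (gsets A cs)} := rfl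
      rw [this]
      exact ih.inter_right (isClosed_eq (continuous_coord c) continuous_const)

lemma nonempty_gsets (A : Mat n) (cs : List (Fin n × Fin n)) : (gsets A cs).Nonempty := by
  induction cs with
  | nil => exact Fset_nonempty A
  | cons c cs ih =>
      obtain ⟨x, hx, hx2⟩ := coordMin_mem (isCompact_gsets A cs) ih c
      exact ⟨x, hx, hx2⟩

lemma gsets_suffix_subset (A : Mat n) {cs cs' : List (Fin n × Fin n)} (h : cs' <:+ cs) :
    gsets A cs ⊆ gsets A cs' := by
  induction cs with
  | nil => rw [List.suffix_nil.1 h]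
  | cons c cs ih =>
      rcases List.suffix_cons_iff.1 h with h1 | h1
      · rw [h1]
      · exact fun x hx => ih h1 hx.1

lemma isClosed_base (C : Set (Mat n)) (hC : IsClosed C) :
    IsClosed {A : Mat n | (Fset A ∩ C).Nonempty} := by
  have hCK : IsCompact (C ∩ Kset n) :=
    isCompact_Kset.of_isClosed_subset (hC.inter isCompact_Kset.isClosed) inter_subset_right
  haveI : CompactSpace ↥(C ∩ Kset n) := isCompact_iff_compactSpace.mp hCK
  have hT : IsClosed {p : Mat n × ↥(C ∩ Kset n) | (p.2 : Mat n) ∈ Fset p.1} := by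
    have heq : {p : Mat n × ↥(C ∩ Kset n) | (p.2 : Mat n) ∈ Fset p.1}
        = (fun p : Mat n × ↥(C ∩ Kset n) => ((p.1, (p.2 : Mat n)) : Mat n × Mat n)) ⁻¹'
          {p : Mat n × Mat n | p.2 ∈ Fset p.1} := rfl
    rw [heq]
    exact isClosed_graphF.preimage
      (continuous_fst.prodMk (continuous_subtype_val.comp continuous_snd))
  have himg := isClosedMap_fst_of_compactSpace (X := Mat n) (Y := ↥(C ∩ Kset n)) _ hT
  have heq2 : {A : Mat n | (Fset A ∩ C).Nonempty}
      = Prod.fst '' {p : Mat n × ↥(C ∩ Kset n) | (p.2 : Mat n) ∈ Fset p.1} := by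
    ext A
    constructor
    · rintro ⟨x, hxF, hxC⟩
      exact ⟨(A, ⟨x, hxC, Fset_subset_Kset A hxF⟩), hxF, rfl⟩
    · rintro ⟨⟨A', x⟩, hx, rfl⟩
      exact ⟨(x : Mat n), hx, x.2.1⟩
  rw [heq2]
  exact himg

lemma measurable_nonempty_inter (cs : List (Fin n × Fin n)) :
    ∀ C : Set (Mat n), IsClosed C → MeasurableSet {A : Mat n | (gsets A cs ∩ C).Nonempty} := by
  induction cs with
  | nil => exact fun C hC => (isClosed_base C hC).measurableSet
  | cons c cs ih =>
      intro C hC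
      have hSq : ∀ q : ℚ, MeasurableSet
          {A : Mat n | (gsets A cs ∩ (C ∩ {x | x c.1 c.2 ≤ (q : ℝ)})).Nonempty} :=
        fun q => ih _ (hC.inter (isClosed_le (continuous_coord c) continuous_const))
      have hMlt : ∀ q : ℚ, {A : Mat n | coordMin c (gsets A cs) < (q : ℝ)}
          = ⋃ q' : ℚ, ⋃ (_ : (q' : ℝ) < (q : ℝ)),
              {A : Mat n | (gsets A cs ∩ {x | x c.1 c.2 ≤ (q' : ℝ)}).Nonempty} := by
        intro q
        ext A
        simp only [mem_setOf_eq, mem_iUnion]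
        constructor
        · intro hm
          obtain ⟨q', hq1, hq2⟩ := exists_rat_btwn hm
          obtain ⟨x, hx, hxc⟩ := coordMin_mem (isCompact_gsets A cs) (nonempty_gsets A cs) c
          exact ⟨q', hq2, ⟨x, hx, by simp only [mem_setOf_eq]; rw [hxc]; exact hq1.le⟩⟩
        · rintro ⟨q', hq', ⟨x, hx, hxle⟩⟩
          exact lt_of_le_of_lt (le_trans (coordMin_le (isCompact_gsets A cs) hx c) hxle) hq'
      have hMm : ∀ q : ℚ, MeasurableSet {A : Mat n | coordMin c (gsets A cs) < (q : ℝ)} := by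
        intro q
        rw [hMlt q]
        exact MeasurableSet.iUnion fun q' => MeasurableSet.iUnion fun _ =>
          ih _ (isClosed_le (continuous_coord c) continuous_const)
      have hkey : {A : Mat n | (gsets A (c :: cs) ∩ C).Nonempty}
          = ⋂ q : ℚ, ({A : Mat n | coordMin c (gsets A cs) < (q : ℝ)}ᶜ ∪
              {A : Mat n | (gsets A cs ∩ (C ∩ {x | x c.1 c.2 ≤ (q : ℝ)})).Nonempty}) := by
        ext A
        simp only [mem_iInter, mem_union, mem_compl_iff, mem_setOf_eq]
        constructor
        · rintro ⟨y, ⟨hy, hyc⟩, hyC⟩ q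
          by_cases hq : coordMin c (gsets A cs) < (q : ℝ)
          · exact Or.inr ⟨y, hy, hyC, by simp only [mem_setOf_eq]; rw [hyc]; exact hq.le⟩
          · exact Or.inl hq
        · intro hall
          set m := coordMin c (gsets A cs) with hm
          have hne : Nonempty {q : ℚ // m < (q : ℝ)} := by
            obtain ⟨q, hq⟩ := exists_rat_gt m
            exact ⟨⟨q, hq⟩⟩
          set t : {q : ℚ // m < (q : ℝ)} → Set (Mat n) :=
            fun q => gsets A cs ∩ (C ∩ {x | x c.1 c.2 ≤ ((q : ℚ) : ℝ)}) with ht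
          have htn : ∀ q, (t q).Nonempty := by
            rintro ⟨q, hq⟩
            rcases hall q with h | h
            · exact absurd hq h
            · exact h
          have htc : ∀ q, IsCompact (t q) :=
            fun q => (isCompact_gsets A cs).inter_right
              (hC.inter (isClosed_le (continuous_coord c) continuous_const))
          have htcl : ∀ q, IsClosed (t q) := fun q => (htc q).isClosed
          have htd : Directed (· ⊇ ·) t := by
            rintro ⟨q1, hq1⟩ ⟨q2, hq2⟩
            refine ⟨⟨min q1 q2, ?_⟩, ?_, ?_⟩
            · rw [Rat.cast_min]; exact lt_min hq1 hq2
            · rintro x ⟨hx1, hx2, hx3⟩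
              simp only [mem_setOf_eq] at hx3
              exact ⟨hx1, hx2, le_trans hx3 (by exact_mod_cast min_le_left q1 q2)⟩
            · rintro x ⟨hx1, hx2, hx3⟩
              simp only [mem_setOf_eq] at hx3
              exact ⟨hx1, hx2, le_trans hx3 (by exact_mod_cast min_le_right q1 q2)⟩
          obtain ⟨y, hy⟩ :=
            IsCompact.nonempty_iInter_of_directed_nonempty_isCompact_isClosed t htd htn htc htcl
          simp only [mem_iInter, ht, mem_inter_iff, mem_setOf_eq] at hy
          obtain ⟨q0⟩ := hne
          have hyg : y ∈ gsets A cs := (hy q0).1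
          have hyC : y ∈ C := (hy q0).2.1
          have hyle : y c.1 c.2 ≤ m := by
            by_contra hcon
            push_neg at hcon
            obtain ⟨q, hq1, hq2⟩ := exists_rat_btwn hcon
            exact absurd ((hy ⟨q, hq1⟩).2.2) (not_le.2 hq2)
          have hyge : m ≤ y c.1 c.2 := coordMin_le (isCompact_gsets A cs) hyg c
          exact ⟨y, ⟨hyg, le_antisymm hyle hyge⟩, hyC⟩
      rw [hkey]
      exact MeasurableSet.iInter fun q => ((hMm q).compl.union (hSq q))

noncomputable def fullL (n : ℕ) : List (Fin n × Fin n) :=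
  (Finset.univ : Finset (Fin n × Fin n)).toList

lemma gsets_unique (A : Mat n) {x y : Mat n} (hx : x ∈ gsets A (fullL n))
    (hy : y ∈ gsets A (fullL n)) : x = y := by
  funext k i
  have hc : (k, i) ∈ fullL n := Finset.mem_toList.2 (Finset.mem_univ _)
  obtain ⟨s, t, hst⟩ := List.append_of_mem hc
  have hsuf : ((k, i) :: t) <:+ fullL n := ⟨s, hst.symm⟩
  have h1 := (gsets_suffix_subset A hsuf hx).2
  have h2 := (gsets_suffix_subset A hsuf hy).2
  exact h1.trans h2.symm

noncomputable def sel (A : Mat n) : Mat n := fun k i => coordMin (k, i) (gsets A (fullL n))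

lemma sel_mem (A : Mat n) : sel A ∈ gsets A (fullL n) := by
  obtain ⟨x, hx⟩ := nonempty_gsets A (fullL n)
  have hxs : sel A = x := by
    funext k i
    obtain ⟨y, hy, hyc⟩ := coordMin_mem (isCompact_gsets A (fullL n))
      (nonempty_gsets A (fullL n)) (k, i)
    have : sel A k i = y (k, i).1 (k, i).2 := hyc.symm
    rw [this]
    exact congrFun (congrFun (gsets_unique A hy hx) k) i
  rw [hxs]; exact hx

lemma measurable_sel (k i : Fin n) : Measurable fun A : Mat n => sel A k i := by
  apply measurable_of_Iic
  intro t
  have heq : (fun A : Mat n => sel A k i) ⁻¹' Iic t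
      = {A : Mat n | (gsets A (fullL n) ∩ {x : Mat n | x k i ≤ t}).Nonempty} := by
    ext A
    simp only [mem_preimage, mem_Iic, mem_setOf_eq]
    constructor
    · intro h
      obtain ⟨y, hy, hyc⟩ := coordMin_mem (isCompact_gsets A (fullL n))
        (nonempty_gsets A (fullL n)) (k, i)
      exact ⟨y, hy, by simp only [mem_setOf_eq]; show y (k,i).1 (k,i).2 ≤ t; rw [hyc]; exact h⟩
    · rintro ⟨y, hy, hyle⟩
      exact le_trans (coordMin_le (isCompact_gsets A (fullL n)) hy (k, i)) hyle
  rw [heq]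
  exact measurable_nonempty_inter _ _ (isClosed_le (continuous_coord (k, i)) continuous_const)

/-- The space of symmetric real `n × n` matrices (encoded as functions `Fin n → Fin n → ℝ`),
with its Borel (sub-)σ-algebra inherited from the product σ-algebra. -/
def SymMat (n : ℕ) : Type := {A : Fin n → Fin n → ℝ // ∀ i j, A i j = A j i}

instance (n : ℕ) : MeasurableSpace (SymMat n) := by unfold SymMat; infer_instance

/-- For every `n` there exist Borel measurable functions
`λ₁,…,λ_n : S(ℝⁿ) → ℝ` and `h₁,…,h_n : S(ℝⁿ) → ℝⁿ` such that for every symmetric matrix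
`A`, the vectors `(h_k(A))` form an orthonormal basis of `ℝⁿ`, the eigenvalues satisfy
`|λ₁(A)| ≥ ⋯ ≥ |λ_n(A)|`, and `A = ∑_k λ_k(A) · h_k(A) h_k(A)ᵀ` (entrywise). -/
theorem stmt9 (n : ℕ) :
    ∃ (lam : Fin n → SymMat n → ℝ) (h : Fin n → SymMat n → (Fin n → ℝ)),
      (∀ k, Measurable (lam k)) ∧ (∀ k, Measurable (h k)) ∧
      ∀ A : SymMat n,
        (∀ k l : Fin n, dotProduct (h k A) (h l A) = if k = l then 1 else 0) ∧
        (∀ k l : Fin n, k ≤ l → |lam l A| ≤ |lam k A|) ∧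
        (∀ i j : Fin n, A.1 i j = ∑ k : Fin n, lam k A * h k A i * h k A j) := by
  classical
  have hcoe : Measurable (fun A : SymMat n => A.1) := measurable_subtype_coe
  have hA : ∀ i j : Fin n, Measurable fun A : SymMat n => A.1 i j := fun i j =>
    (measurable_pi_apply j).comp ((measurable_pi_apply i).comp hcoe)
  have hs : ∀ k i : Fin n, Measurable fun A : SymMat n => sel A.1 k i := fun k i =>
    (measurable_sel k i).comp hcoe
  refine ⟨fun k A => lamOf A.1 (sel A.1) k, fun k A => sel A.1 k, ?_, ?_, ?_⟩
  · intro k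
    unfold lamOf symz
    exact Finset.measurable_sum _ fun i _ => Finset.measurable_sum _ fun j _ =>
      ((hs k i).mul (((hA i j).add (hA j i)).div_const 2)).mul (hs k j)
  · intro k
    exact measurable_pi_lambda _ fun i => hs k i
  · intro A
    have hmem : sel A.1 ∈ Fset A.1 := gsets_subset_Fset A.1 (fullL n) (sel_mem A.1)
    have hsymm : ∀ i j, symz A.1 i j = A.1 i j := by
      intro i j
      unfold symz
      rw [← A.2 i j]
      ring
    refine ⟨fun k l => ?_, hmem.2.1, fun i j => ?_⟩
    · have := hmem.1 k l
      simpa [dotProduct] using this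
    · have := hmem.2.2 i j
      rw [hsymm] at this
      exact this
end

section
/- Let H be a separable Hilbert space, V ⊆ H a dense linear subspace, g₁,…,g_m ∈ H, x ∈ H orthogonal to span{g₁,…,g_m}, and ε > 0. Then there exists v ∈ V with ‖v − x‖ < ε and v orthogonal to span{g₁,…,g_m}. -/
open scoped RealInnerProductSpace

set_option synthInstance.maxHeartbeats 1000000
set_option maxHeartbeats 1000000

/-- Let `H` be a separable Hilbert space, `V ⊆ H` a dense linear subspace,
`g₁,…,g_m ∈ H`, `x ∈ H` orthogonal to `span {g₁,…,g_m}`, and `ε > 0`.  Then there is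
`v ∈ V` with `‖v − x‖ < ε` and `v` orthogonal to `span {g₁,…,g_m}`. -/
theorem stmt11 {H : Type*} [NormedAddCommGroup H] [InnerProductSpace ℝ H] [CompleteSpace H]
    [TopologicalSpace.SeparableSpace H]
    (V : Submodule ℝ H) (hV : Dense (V : Set H))
    (m : ℕ) (g : Fin m → H) (x : H) (hx : ∀ j, ⟪x, g j⟫ = 0)
    (ε : ℝ) (hε : 0 < ε) :
    ∃ v ∈ V, ‖v - x‖ < ε ∧ ∀ j, ⟪v, g j⟫ = 0 := by
  set T : H →L[ℝ] (Fin m → ℝ) := ContinuousLinearMap.pi (fun j => innerSL ℝ (g j)) with hT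
  have hTx : T x = 0 := by
    funext j
    show ⟪g j, x⟫ = 0
    rw [real_inner_comm]; exact hx j
  set f : V →ₗ[ℝ] (Fin m → ℝ) := (T : H →ₗ[ℝ] (Fin m → ℝ)).comp V.subtype with hf
  obtain ⟨S, hS⟩ := f.rangeRestrict.exists_rightInverse_of_surjective
    (LinearMap.range_rangeRestrict f)
  set S' : (LinearMap.range f) →L[ℝ] H :=
    LinearMap.toContinuousLinearMap (V.subtype.comp S) with hS'
  set K : ℝ := 1 + ‖S'‖ * ‖T‖ with hK
  have hK0 : 0 < K := by positivity
  obtain ⟨v₀, hv₀V, hv₀⟩ : ∃ y ∈ (V : Set H), dist x y < ε / K :=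
    Metric.mem_closure_iff.mp (hV.closure_eq ▸ Set.mem_univ x : x ∈ closure (V : Set H))
      _ (div_pos hε hK0)
  have hv₀n : ‖v₀ - x‖ < ε / K := by
    rw [norm_sub_rev]
    rwa [dist_eq_norm] at hv₀
  set w : LinearMap.range f := ⟨T v₀, ⟨⟨v₀, hv₀V⟩, rfl⟩⟩ with hw
  have hSw : (S w : H) ∈ V := (S w).2
  have hS'w : S' w = (S w : H) := rfl
  have hTS : T (S' w) = T v₀ := by
    have := congrArg (fun φ => (φ w : Fin m → ℝ)) hS
    simpa [hS'w, hf] using congrArg Subtype.val (LinearMap.ext_iff.mp hS w)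
  refine ⟨v₀ - S' w, sub_mem hv₀V (hS'w ▸ hSw), ?_, ?_⟩
  · have h1 : ‖S' w‖ ≤ ‖S'‖ * ‖w‖ := S'.le_opNorm w
    have h2 : ‖(w : Fin m → ℝ)‖ = ‖T (v₀ - x)‖ := by
      simp [hw, map_sub, hTx]
    have h3 : ‖T (v₀ - x)‖ ≤ ‖T‖ * ‖v₀ - x‖ := T.le_opNorm _
    have hwn : ‖w‖ ≤ ‖T‖ * ‖v₀ - x‖ := by
      have : ‖w‖ = ‖(w : Fin m → ℝ)‖ := rfl
      rw [this, h2]; exact h3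
    calc ‖v₀ - S' w - x‖ = ‖(v₀ - x) - S' w‖ := by rw [sub_right_comm]
      _ ≤ ‖v₀ - x‖ + ‖S' w‖ := norm_sub_le _ _
      _ ≤ ‖v₀ - x‖ + ‖S'‖ * (‖T‖ * ‖v₀ - x‖) := by
          gcongr
          exact h1.trans (by gcongr)
      _ = K * ‖v₀ - x‖ := by ring
      _ < K * (ε / K) := by gcongr
      _ = ε := by field_simp
  · intro j
    have : T (v₀ - S' w) = 0 := by rw [map_sub, hTS, sub_self]
    have hj := congrFun this j
    simpa [hT, real_inner_comm] using hj
end
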